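/- Let G be a finite group with a central subgroup A ≅ ℤ/2 contained in [G,G], Γ = G/A, and suppose |H²(G,ℂˣ)| · 2 > |H²(Γ,ℂˣ)|. Then the image of the commutator-pairing map γ : H²(G,ℂˣ) → Hom(A ⊗ G, ℂˣ), γ(η)(a,g) = η(g,a)η(a,g)⁻¹, is nontrivial; i.e., there is a 2-cocycle η ∈ Z²(G, ℂˣ) with η(g,a) ≠ η(a,g) for some g ∈ G, a ∈ A. -/

import Mathlib

/-- The 2-cocycle condition for `ℂˣ`-valued cocycles on a group. -/
def IsCocycle {G : Type*} [Group G] (η : G → G → ℂˣ) : Prop :=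
  ∀ x y z : G, η x y * η (x * y) z = η y z * η x (y * z)

/-- Cohomologous cocycles: they differ by a coboundary. -/
def CohRel (G : Type*) [Group G]
    (η η' : {f : G → G → ℂˣ // IsCocycle f}) : Prop :=
  ∃ τ : G → ℂˣ, ∀ x y : G, η'.1 x y = η.1 x y * τ x * τ y * (τ (x * y))⁻¹

/-- The cardinality of the Schur multiplier `H²(G, ℂˣ)`. -/
noncomputable def H2card (G : Type*) [Group G] : ℕ :=
  Nat.card (Quot (CohRel G))

namespace Stmt17

variable {G : Type*} [Group G]
def twist (η : G → G → ℂˣ) (τ : G → ℂˣ) : G → G → ℂˣ :=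
  fun x y => η x y * τ x * τ y * (τ (x*y))⁻¹
lemma twist_cocycle {η : G → G → ℂˣ} (hη : IsCocycle η) (τ : G → ℂˣ) :
    IsCocycle (twist η τ) := by
  intro x y z
  have h := hη x y z
  rw [Units.ext_iff] at h ⊢
  push_cast [twist, mul_assoc] at h ⊢
  field_simp at h ⊢
  linear_combination h

lemma cohRel_twist {η : G → G → ℂˣ} (hη : IsCocycle η) (τ : G → ℂˣ) :
    CohRel G ⟨η, hη⟩ ⟨twist η τ, twist_cocycle hη τ⟩ :=
  ⟨τ, fun _ _ => rfl⟩

lemma cohRel_refl (η : {f : G → G → ℂˣ // IsCocycle f}) : CohRel G η η := by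
  refine ⟨fun _ => 1, fun x y => ?_⟩; simp
lemma cohRel_symm {η η' : {f : G → G → ℂˣ // IsCocycle f}} (h : CohRel G η η') :
    CohRel G η' η := by
  obtain ⟨τ, hτ⟩ := h
  refine ⟨fun g => (τ g)⁻¹, fun x y => ?_⟩
  rw [hτ x y, Units.ext_iff]; push_cast; field_simp
lemma cohRel_trans {a b c : {f : G → G → ℂˣ // IsCocycle f}} (h : CohRel G a b)
    (h' : CohRel G b c) : CohRel G a c := by
  obtain ⟨τ, hτ⟩ := h; obtain ⟨σ, hσ⟩ := h'
  refine ⟨fun g => τ g * σ g, fun x y => ?_⟩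
  rw [hσ x y, hτ x y, Units.ext_iff]; push_cast; field_simp
lemma cohRel_equivalence : Equivalence (CohRel G) :=
  ⟨cohRel_refl, cohRel_symm, cohRel_trans⟩
lemma quot_eq_iff {η η' : {f : G → G → ℂˣ // IsCocycle f}} :
    Quot.mk (CohRel G) η = Quot.mk (CohRel G) η' ↔ CohRel G η η' := by
  rw [Quot.eq, cohRel_equivalence.eqvGen_iff]

lemma one_cocycle : IsCocycle (fun (_ _ : G) => (1 : ℂˣ)) := by
  intro x y z; simp

lemma finite_quot [Finite G] : Finite (Quot (CohRel G)) := by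
  cases nonempty_fintype G
  set n := Fintype.card G with hn
  have hnpos : 0 < n := Fintype.card_pos
  classical
  have hfin : Finite (G → G → rootsOfUnity n ℂ) := by infer_instance
  set Φ : (G → G → rootsOfUnity n ℂ) → Quot (CohRel G) := fun f =>
    if h : IsCocycle (fun x y => ((f x y : ℂˣ))) then Quot.mk _ ⟨_, h⟩
    else Quot.mk _ ⟨_, one_cocycle⟩ with hΦ
  have hsurj : Function.Surjective Φ := by
    intro q
    induction q using Quot.ind with
    | _ η =>
      obtain ⟨η, hη⟩ := η
      -- norm map
      set lam : G → ℂˣ := fun x => ∏ w : G, η x w with hlam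
      have key : ∀ x y, (η x y)^n * lam (x*y) = lam x * lam y := by
        intro x y
        have h1 : ∏ w : G, (η x y * η (x*y) w) = ∏ w : G, (η y w * η x (y*w)) := by
          refine Finset.prod_congr rfl fun w _ => hη x y w
        rw [Finset.prod_mul_distrib, Finset.prod_mul_distrib, Finset.prod_const] at h1
        have h2 : ∏ w : G, η x (y*w) = ∏ w : G, η x w :=
          Equiv.prod_comp (Equiv.mulLeft y) (fun w => η x w)
        rw [h2] at h1
        have h1' : η x y ^ n * lam (x*y) = lam y * lam x := by
          simpa [hlam, hn, Finset.card_univ] using h1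
        rw [h1', mul_comm]
      -- choose n-th roots of lam⁻¹
      have hex : ∀ x : G, ∃ c : ℂˣ, (c:ℂ)^n = ((lam x)⁻¹ : ℂˣ) := by
        intro x
        obtain ⟨c, hc⟩ := IsAlgClosed.exists_pow_nat_eq (k := ℂ) (((lam x)⁻¹ : ℂˣ) : ℂ) hnpos
        have hc0 : c ≠ 0 := by
          intro h0; rw [h0] at hc
          simp [zero_pow hnpos.ne'] at hc
          exact (Units.ne_zero _ hc.symm)
        exact ⟨Units.mk0 c hc0, hc⟩
      choose τ hτ using hex
      have hcoc := twist_cocycle hη τ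
      have htor : ∀ x y, (twist η τ x y)^n = 1 := by
        intro x y
        have hk := key x y
        rw [Units.ext_iff] at hk ⊢
        push_cast at hk ⊢
        rw [twist]
        push_cast
        rw [mul_pow, mul_pow, mul_pow, hτ, hτ, inv_pow, hτ]
        push_cast
        field_simp
        linear_combination hk
      refine ⟨fun x y => ⟨twist η τ x y, by rw [mem_rootsOfUnity]; exact htor x y⟩, ?_⟩
      rw [hΦ]
      simp only [dif_pos hcoc]
      exact (quot_eq_iff.2 (cohRel_symm (cohRel_twist hη τ)))
  exact Finite.of_surjective Φ hsurj

variable {G : Type*} [Group G]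

open Classical in
/-- the sign character -/
noncomputable def chi (a : G) : ℂˣ := if a = 1 then 1 else -1

def infl (A : Subgroup G) [A.Normal] (μ : (G ⧸ A) → (G ⧸ A) → ℂˣ) : G → G → ℂˣ :=
  fun g h => μ (↑g) (↑h)

lemma infl_cocycle {A : Subgroup G} [A.Normal] {μ : (G ⧸ A) → (G ⧸ A) → ℂˣ}
    (hμ : IsCocycle μ) : IsCocycle (infl A μ) := by
  intro x y z
  simp only [infl, QuotientGroup.mk_mul]
  exact hμ x y z

noncomputable def tpart (A : Subgroup G) [A.Normal] (g : G) : G :=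
  g * (Quotient.out ((g : G ⧸ A)))⁻¹

noncomputable def fcoc (A : Subgroup G) [A.Normal] (x y : G ⧸ A) : G :=
  Quotient.out x * Quotient.out y * (Quotient.out (x*y))⁻¹

noncomputable def kappa (A : Subgroup G) [A.Normal] : (G ⧸ A) → (G ⧸ A) → ℂˣ :=
  fun x y => chi (fcoc A x y)

lemma tpart_mem (A : Subgroup G) [A.Normal] (g : G) : tpart A g ∈ A := by
  rw [← QuotientGroup.eq_one_iff]
  simp only [tpart, QuotientGroup.mk_mul, QuotientGroup.mk_inv, QuotientGroup.out_eq']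
  group

lemma tpart_spec (A : Subgroup G) [A.Normal] (g : G) :
    tpart A g * Quotient.out ((g : G ⧸ A)) = g := by
  simp [tpart]

lemma fcoc_mem (A : Subgroup G) [A.Normal] (x y : G ⧸ A) : fcoc A x y ∈ A := by
  rw [← QuotientGroup.eq_one_iff]
  simp only [fcoc, QuotientGroup.mk_mul, QuotientGroup.mk_inv, QuotientGroup.out_eq']
  group

lemma fcoc_spec (A : Subgroup G) [A.Normal] (x y : G ⧸ A) :
    Quotient.out x * Quotient.out y = fcoc A x y * Quotient.out (x*y) := by
  simp [fcoc, inv_mul_cancel_right]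

lemma central_comm {A : Subgroup G} (hA1 : A ≤ Subgroup.center G) {a : G} (ha : a ∈ A)
    (g : G) : a * g = g * a :=
  ((Subgroup.mem_center_iff.mp (hA1 ha)) g).symm

lemma fcoc_id (A : Subgroup G) [A.Normal] (hA1 : A ≤ Subgroup.center G) (x y w : G ⧸ A) :
    fcoc A x y * fcoc A (x*y) w = fcoc A y w * fcoc A x (y*w) := by
  have h1 : (Quotient.out x * Quotient.out y) * Quotient.out w
      = (fcoc A x y * fcoc A (x*y) w) * Quotient.out (x*y*w) := by
    rw [fcoc_spec A x y, mul_assoc, fcoc_spec A (x*y) w, ← mul_assoc]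
  have h2 : Quotient.out x * (Quotient.out y * Quotient.out w)
      = (fcoc A y w * fcoc A x (y*w)) * Quotient.out (x*(y*w)) := by
    rw [fcoc_spec A y w, ← mul_assoc, ← central_comm hA1 (fcoc_mem A y w),
      mul_assoc (fcoc A y w), fcoc_spec A x (y*w), ← mul_assoc]
  have h3 : (fcoc A x y * fcoc A (x*y) w) * Quotient.out (x*y*w)
      = (fcoc A y w * fcoc A x (y*w)) * Quotient.out (x*y*w) := by
    rw [← h1, mul_assoc, h2, ← mul_assoc, mul_assoc x y w]
  exact mul_right_cancel h3

lemma chi_one : chi (1 : G) = 1 := by simp [chi]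

lemma chi_z {z : G} (hz1 : z ≠ 1) : chi z = -1 := by simp [chi, hz1]

lemma chi_mul {A : Subgroup G} {z : G} (hz1 : z ≠ 1) (hzz : z * z = 1)
    (hmem : ∀ a ∈ A, a = 1 ∨ a = z) {a b : G} (ha : a ∈ A) (hb : b ∈ A) :
    chi (a*b) = chi a * chi b := by
  rcases hmem a ha with rfl | rfl <;> rcases hmem b hb with rfl | rfl <;>
    simp [chi, hzz, hz1]

lemma kappa_cocycle (A : Subgroup G) [A.Normal] (hA1 : A ≤ Subgroup.center G) {z : G}
    (hz1 : z ≠ 1) (hzz : z * z = 1) (hmem : ∀ a ∈ A, a = 1 ∨ a = z) :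
    IsCocycle (kappa A) := by
  intro x y w
  unfold kappa
  rw [← chi_mul hz1 hzz hmem (fcoc_mem A x y) (fcoc_mem A (x*y) w),
    ← chi_mul hz1 hzz hmem (fcoc_mem A y w) (fcoc_mem A x (y*w)),
    fcoc_id A hA1]

lemma tpart_id (A : Subgroup G) [A.Normal] (hA1 : A ≤ Subgroup.center G) (g h : G) :
    tpart A (g*h) = tpart A g * tpart A h * fcoc A (↑g) (↑h) := by
  apply mul_right_cancel (b := Quotient.out ((↑(g*h) : G ⧸ A)))
  rw [tpart_spec]
  have hmm : (↑(g*h) : G ⧸ A) = (↑g : G ⧸ A) * (↑h : G ⧸ A) := rfl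
  rw [hmm, mul_assoc, ← fcoc_spec A]
  rw [show tpart A g * tpart A h * (Quotient.out (↑g : G ⧸ A) * Quotient.out (↑h : G ⧸ A))
      = tpart A g * (tpart A h * Quotient.out (↑g : G ⧸ A)) * Quotient.out (↑h : G ⧸ A) by
    group]
  rw [central_comm hA1 (tpart_mem A h), ← mul_assoc, tpart_spec, mul_assoc, tpart_spec]

lemma chi_tpart_id (A : Subgroup G) [A.Normal] (hA1 : A ≤ Subgroup.center G) {z : G}
    (hz1 : z ≠ 1) (hzz : z * z = 1) (hmem : ∀ a ∈ A, a = 1 ∨ a = z) (g h : G) :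
    chi (tpart A (g*h)) = chi (tpart A g) * chi (tpart A h) * chi (fcoc A ↑g ↑h) := by
  rw [tpart_id A hA1 g h,
    chi_mul hz1 hzz hmem (mul_mem (tpart_mem A g) (tpart_mem A h)) (fcoc_mem A _ _),
    chi_mul hz1 hzz hmem (tpart_mem A g) (tpart_mem A h)]

lemma infl_kappa_coboundary (A : Subgroup G) [A.Normal] (hA1 : A ≤ Subgroup.center G)
    {z : G} (hz1 : z ≠ 1) (hzz : z * z = 1) (hmem : ∀ a ∈ A, a = 1 ∨ a = z) :
    ∃ τ : G → ℂˣ, ∀ g h, infl A (kappa A) g h = τ g * τ h * (τ (g*h))⁻¹ := by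
  refine ⟨fun g => (chi (tpart A g))⁻¹, fun g h => ?_⟩
  have h1 := chi_tpart_id A hA1 hz1 hzz hmem g h
  show chi (fcoc A ↑g ↑h) = _
  rw [Units.ext_iff] at h1 ⊢
  push_cast at h1 ⊢
  field_simp at h1 ⊢
  linear_combination -h1

lemma kappa_nontrivial (A : Subgroup G) [A.Normal] (hA1 : A ≤ Subgroup.center G)
    (hA2 : A ≤ commutator G) {z : G} (hzA : z ∈ A) (hz1 : z ≠ 1) (hzz : z * z = 1)
    (hmem : ∀ a ∈ A, a = 1 ∨ a = z) :
    ¬ ∃ τ : (G ⧸ A) → ℂˣ, ∀ x y, kappa A x y = τ x * τ y * (τ (x*y))⁻¹ := by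
  rintro ⟨τ, hτ⟩
  set ρ : G → ℂˣ := fun g => chi (tpart A g) * τ (↑g) with hρ
  have hmul : ∀ g h, ρ (g*h) = ρ g * ρ h := by
    intro g h
    have h1 := chi_tpart_id A hA1 hz1 hzz hmem g h
    have h2 := hτ (↑g) (↑h)
    rw [hρ]
    simp only [QuotientGroup.mk_mul]
    rw [Units.ext_iff] at h1 h2 ⊢
    push_cast at h1 h2 ⊢
    rw [h1]
    unfold kappa at h2
    field_simp at h2 ⊢
    linear_combination h2
  set ρhom : G →* ℂˣ := MonoidHom.mk' ρ hmul with hρhom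
  have hker : ρhom z = 1 := Abelianization.commutator_subset_ker ρhom (hA2 hzA)
  have hone : ρhom 1 = 1 := map_one _
  have hz' : (↑z : G ⧸ A) = 1 := (QuotientGroup.eq_one_iff z).2 hzA
  have e1 : chi (tpart A z) * τ 1 = 1 := by
    have h' : ρhom z = chi (tpart A z) * τ (↑z) := rfl
    rw [h', hz'] at hker; exact hker
  have e2 : chi (tpart A 1) * τ 1 = 1 := by
    have h' : ρhom 1 = chi (tpart A 1) * τ (↑(1:G)) := rfl
    rw [h', QuotientGroup.mk_one] at hone; exact hone
  have e3 : tpart A z = z * tpart A 1 := by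
    unfold tpart
    rw [hz', QuotientGroup.mk_one, one_mul]
  have hsoutA : tpart A 1 ∈ A := tpart_mem A 1
  have e4 : chi (tpart A z) = chi z * chi (tpart A 1) := by
    rw [e3, chi_mul hz1 hzz hmem hzA hsoutA]
  have e5 : (-1 : ℂˣ) * (chi (tpart A 1) * τ 1) = 1 := by
    rw [← mul_assoc, ← chi_z hz1, ← e4]; exact e1
  rw [e2, mul_one] at e5
  exact absurd (congrArg Units.val e5) (by norm_num)

-- ### normalization
lemma cocycle_one_left {η : G → G → ℂˣ} (hη : IsCocycle η) (y : G) : η 1 y = η 1 1 := by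
  have h := hη 1 1 y
  simp only [one_mul] at h
  exact (mul_right_cancel h).symm
lemma cocycle_one_right {η : G → G → ℂˣ} (hη : IsCocycle η) (x : G) : η x 1 = η 1 1 := by
  have h := hη x 1 1
  simp only [mul_one, one_mul] at h
  exact (mul_right_cancel h.symm).symm

lemma normalize {z : G} (hz1 : z ≠ 1) (hzz : z * z = 1) {η : G → G → ℂˣ}
    (hη : IsCocycle η) :
    ∃ η' : G → G → ℂˣ, ∃ hη' : IsCocycle η', CohRel G ⟨η, hη⟩ ⟨η', hη'⟩ ∧
      (∀ y, η' 1 y = 1) ∧ (∀ x, η' x 1 = 1) ∧ η' z z = 1 := by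
  classical
  set η1 := twist η (fun _ => (η 1 1)⁻¹) with hη1def
  have hη1 : IsCocycle η1 := twist_cocycle hη _
  have hη1a : ∀ y, η1 1 y = 1 := by
    intro y
    show η 1 y * (η 1 1)⁻¹ * (η 1 1)⁻¹ * ((η 1 1)⁻¹)⁻¹ = 1
    rw [cocycle_one_left hη y]; group
  have hη1b : ∀ x, η1 x 1 = 1 := by
    intro x
    show η x 1 * (η 1 1)⁻¹ * (η 1 1)⁻¹ * ((η 1 1)⁻¹)⁻¹ = 1
    rw [cocycle_one_right hη x]; group
  obtain ⟨c, hc⟩ := IsAlgClosed.exists_pow_nat_eq (k := ℂ) (((η1 z z)⁻¹ : ℂˣ) : ℂ)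
    (n := 2) (by norm_num)
  have hc0 : c ≠ 0 := by
    intro h0; rw [h0] at hc
    simp at hc
    exact (Units.ne_zero _ hc.symm)
  set c2 : ℂˣ := Units.mk0 c hc0 with hc2def
  have hc2 : (c2 : ℂ)^2 = ((η1 z z : ℂˣ) : ℂ)⁻¹ := by
    rw [hc2def, Units.val_mk0, hc, Units.val_inv_eq_inv_val]
  set τ2 : G → ℂˣ := fun g => if g = z then c2 else 1 with hτ2def
  have hτ2one : τ2 1 = 1 := if_neg (fun h => hz1 h.symm)
  have hτ2z : τ2 z = c2 := if_pos rfl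
  refine ⟨twist η1 τ2, twist_cocycle hη1 τ2, ?_, ?_, ?_, ?_⟩
  · -- CohRel η (twist (twist η _) τ2)
    obtain ⟨σ1, h1⟩ := cohRel_twist hη (fun _ => (η 1 1)⁻¹)
    obtain ⟨σ2, h2⟩ := cohRel_twist hη1 τ2
    refine ⟨fun g => σ1 g * σ2 g, fun x y => ?_⟩
    rw [h2 x y, h1 x y, Units.ext_iff]; push_cast; field_simp
  · intro y
    show η1 1 y * τ2 1 * τ2 y * (τ2 (1*y))⁻¹ = 1
    rw [one_mul, hη1a y, hτ2one]; group
  · intro x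
    show η1 x 1 * τ2 x * τ2 1 * (τ2 (x*1))⁻¹ = 1
    rw [mul_one, hη1b x, hτ2one]; group
  · show η1 z z * τ2 z * τ2 z * (τ2 (z*z))⁻¹ = 1
    rw [hzz, hτ2one, hτ2z, inv_one, mul_one]
    rw [Units.ext_iff]; push_cast
    have : ((η1 z z : ℂˣ) : ℂ) ≠ 0 := Units.ne_zero _
    field_simp at hc2 ⊢
    linear_combination hc2

-- ### descent
lemma descent (A : Subgroup G) [A.Normal] (hA1 : A ≤ Subgroup.center G) {z : G}
    (hzA : z ∈ A) (hz1 : z ≠ 1) (hzz : z * z = 1) (hmem : ∀ a ∈ A, a = 1 ∨ a = z)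
    {η2 : G → G → ℂˣ} (hη2 : IsCocycle η2) (h1y : ∀ y, η2 1 y = 1)
    (hzz2 : η2 z z = 1) (hsym : ∀ g, η2 g z = η2 z g) :
    ∃ μ : (G ⧸ A) → (G ⧸ A) → ℂˣ, ∃ hμ : IsCocycle μ,
      CohRel G ⟨η2, hη2⟩ ⟨infl A μ, infl_cocycle hμ⟩ := by
  classical
  have hαz : ∀ g, η2 z g * η2 z (z*g) = 1 := by
    intro g
    have h := hη2 z z g
    rw [hzz, hzz2, h1y g, one_mul] at h
    exact h.symm
  have hL : ∀ g h, η2 (z*g) h = η2 g h * η2 z (g*h) * (η2 z g)⁻¹ := by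
    intro g h
    have hc := hη2 z g h
    rw [Units.ext_iff] at hc ⊢
    push_cast at hc ⊢
    field_simp at hc ⊢
    linear_combination hc
  have hR : ∀ g h, η2 g (z*h) = η2 g h * η2 z (g*h) * (η2 z h)⁻¹ := by
    intro g h
    have hc := hη2 g z h
    rw [← central_comm hA1 hzA g, hsym g, hL g h] at hc
    rw [Units.ext_iff] at hc ⊢
    push_cast at hc ⊢
    field_simp at hc ⊢
    linear_combination -hc
  set τ3 : G → ℂˣ := fun g =>
    if g = Quotient.out ((g : G ⧸ A)) then 1 else η2 z (Quotient.out ((g : G ⧸ A)))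
    with hτ3def
  have hπz : ∀ g : G, ((z*g : G) : G ⧸ A) = (g : G ⧸ A) := by
    intro g
    rw [QuotientGroup.mk_mul, (QuotientGroup.eq_one_iff z).2 hzA, one_mul]
  have hdecomp : ∀ g : G, g ≠ Quotient.out ((g : G ⧸ A)) →
      g = z * Quotient.out ((g : G ⧸ A)) := by
    intro g hg
    have h1 := tpart_spec A g
    rcases hmem _ (tpart_mem A g) with h | h
    · rw [h, one_mul] at h1; exact absurd h1.symm hg
    · rw [h] at h1; exact h1.symm
  have hτ3 : ∀ g, τ3 (z*g) = η2 z g * τ3 g := by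
    intro g
    by_cases hg : g = Quotient.out ((g : G ⧸ A))
    · have h1 : z*g ≠ Quotient.out (((z*g : G) : G ⧸ A)) := by
        rw [hπz g, ← hg]
        intro hcontra
        exact hz1 (mul_eq_right.mp hcontra)
      rw [hτ3def]
      simp only [hπz g, ← hg]
      rw [if_neg (show ¬ z*g = g from fun hc2 => hz1 (mul_eq_right.mp hc2))]
      simp
    · have hgz2 : g = z * Quotient.out ((g : G ⧸ A)) := hdecomp g hg
      have h2 : z*g = Quotient.out (((z*g : G) : G ⧸ A)) := by
        rw [hπz g]
        conv_lhs => rw [hgz2, ← mul_assoc, hzz, one_mul]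
      rw [hτ3def]
      simp only [if_pos h2, if_neg hg]
      have h3 := hαz (Quotient.out ((g : G ⧸ A)))
      rw [← hgz2] at h3
      rw [mul_comm] at h3
      exact h3.symm
  have hinv1 : ∀ g h, twist η2 τ3 (z*g) h = twist η2 τ3 g h := by
    intro g h
    show η2 (z*g) h * τ3 (z*g) * τ3 h * (τ3 ((z*g)*h))⁻¹
      = η2 g h * τ3 g * τ3 h * (τ3 (g*h))⁻¹
    rw [mul_assoc z g h, hτ3 (g*h), hτ3 g, hL g h]
    rw [Units.ext_iff]; push_cast; field_simp
  have hinv2 : ∀ g h, twist η2 τ3 g (z*h) = twist η2 τ3 g h := by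
    intro g h
    have hassoc : g*(z*h) = z*(g*h) := by
      rw [← mul_assoc, ← central_comm hA1 hzA g, mul_assoc]
    show η2 g (z*h) * τ3 g * τ3 (z*h) * (τ3 (g*(z*h)))⁻¹
      = η2 g h * τ3 g * τ3 h * (τ3 (g*h))⁻¹
    rw [hassoc, hτ3 (g*h), hτ3 h, hR g h]
    rw [Units.ext_iff]; push_cast; field_simp
  have hred1 : ∀ g h, twist η2 τ3 g h = twist η2 τ3 (Quotient.out ((g : G ⧸ A))) h := by
    intro g h
    by_cases hg : g = Quotient.out ((g : G ⧸ A))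
    · rw [← hg]
    · conv_lhs => rw [hdecomp g hg]
      exact hinv1 _ h
  have hred2 : ∀ g h, twist η2 τ3 g h = twist η2 τ3 g (Quotient.out ((h : G ⧸ A))) := by
    intro g h
    by_cases hh : h = Quotient.out ((h : G ⧸ A))
    · rw [← hh]
    · conv_lhs => rw [hdecomp h hh]
      exact hinv2 g _
  have hcong : ∀ g g' h h' : G, (g : G ⧸ A) = (g' : G ⧸ A) → (h : G ⧸ A) = (h' : G ⧸ A) →
      twist η2 τ3 g h = twist η2 τ3 g' h' := by
    intro g g' h h' hgg hhh
    rw [hred1 g h, hred2 _ h, hgg, hhh, ← hred2 _ h', ← hred1 g' h']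
  set μ : (G ⧸ A) → (G ⧸ A) → ℂˣ :=
    fun x y => twist η2 τ3 (Quotient.out x) (Quotient.out y) with hμdef
  have hμ : IsCocycle μ := by
    intro x y w
    show twist η2 τ3 (Quotient.out x) (Quotient.out y)
        * twist η2 τ3 (Quotient.out (x*y)) (Quotient.out w)
      = twist η2 τ3 (Quotient.out y) (Quotient.out w)
        * twist η2 τ3 (Quotient.out x) (Quotient.out (y*w))
    have e1 : twist η2 τ3 (Quotient.out (x*y)) (Quotient.out w)
        = twist η2 τ3 (Quotient.out x * Quotient.out y) (Quotient.out w) :=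
      hcong _ _ _ _ (by simp [QuotientGroup.mk_mul, QuotientGroup.out_eq']) rfl
    have e2 : twist η2 τ3 (Quotient.out x) (Quotient.out (y*w))
        = twist η2 τ3 (Quotient.out x) (Quotient.out y * Quotient.out w) :=
      hcong _ _ _ _ rfl (by simp [QuotientGroup.mk_mul, QuotientGroup.out_eq'])
    rw [e1, e2]
    exact twist_cocycle hη2 τ3 (Quotient.out x) (Quotient.out y) (Quotient.out w)
  have hμinfl : ∀ g h, infl A μ g h = twist η2 τ3 g h := by
    intro g h
    exact ((hred1 g h).trans (hred2 _ h)).symm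
  refine ⟨μ, hμ, ?_⟩
  have hsub : (⟨infl A μ, infl_cocycle hμ⟩ : {f : G → G → ℂˣ // IsCocycle f})
      = ⟨twist η2 τ3, twist_cocycle hη2 τ3⟩ :=
    Subtype.ext (funext fun g => funext fun h => hμinfl g h)
  rw [hsub]
  exact cohRel_twist hη2 τ3

lemma mul_cocycle {η η' : G → G → ℂˣ} (h : IsCocycle η) (h' : IsCocycle η') :
    IsCocycle (fun x y => η x y * η' x y) := by
  intro x y z
  have a := h x y z; have b := h' x y z
  rw [Units.ext_iff] at a b ⊢
  push_cast at a b ⊢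
  linear_combination ((η' x y : ℂ) * (η' (x*y) z : ℂ)) * a
    + ((η y z : ℂ) * (η x (y*z) : ℂ)) * b

noncomputable def InflQ (A : Subgroup G) [A.Normal] :
    Quot (CohRel (G ⧸ A)) → Quot (CohRel G) :=
  Quot.lift (fun μ => Quot.mk _ ⟨infl A μ.1, infl_cocycle μ.2⟩) (by
    rintro μ μ' ⟨τ, hτ⟩
    apply Quot.sound
    refine ⟨fun g => τ (↑g), fun g h => ?_⟩
    exact hτ (↑g) (↑h))

noncomputable def KMul (A : Subgroup G) [A.Normal] (hκ : IsCocycle (kappa A)) :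
    Quot (CohRel (G ⧸ A)) → Quot (CohRel (G ⧸ A)) :=
  Quot.lift
    (fun μ => Quot.mk _ ⟨fun x y => μ.1 x y * kappa A x y, mul_cocycle μ.2 hκ⟩) (by
    rintro μ μ' ⟨τ, hτ⟩
    apply Quot.sound
    refine ⟨τ, fun x y => ?_⟩
    show μ'.1 x y * kappa A x y = μ.1 x y * kappa A x y * τ x * τ y * (τ (x*y))⁻¹
    rw [hτ x y, Units.ext_iff]
    push_cast
    ring)

end Stmt17

open Stmt17 in
/-- If `A ≅ ℤ/2` is central and contained in `[G,G]`, `Γ = G/A`, and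
`2·|H²(G,ℂˣ)| > |H²(Γ,ℂˣ)|`, then by Matsumoto's exact sequence there exists a
2-cocycle `η` on `G` with `η(g,a) ≠ η(a,g)` for some `g ∈ G`, `a ∈ A`. -/
theorem stmt_17 {G : Type*} [Group G] [Finite G] (A : Subgroup G) [A.Normal]
    (hA1 : A ≤ Subgroup.center G) (hA2 : A ≤ commutator G)
    (hcard : Nat.card A = 2)
    (hH : 2 * H2card G > H2card (G ⧸ A)) :
    ∃ η : G → G → ℂˣ, IsCocycle η ∧
      ∃ (g : G) (a : G), a ∈ A ∧ η g a ≠ η a g := by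
  by_contra hcon
  push_neg at hcon
  -- extract the central involution z
  obtain ⟨z', hz'1, hz'uniq⟩ := (Nat.card_eq_two_iff' (1 : ↥A)).mp hcard
  have hmem' : ∀ a : ↥A, a = 1 ∨ a = z' := fun a =>
    or_iff_not_imp_left.mpr (fun h => hz'uniq a h)
  set z : G := (z' : G) with hzdef
  have hzA : z ∈ A := z'.2
  have hz1 : z ≠ 1 := fun h => hz'1 (Subtype.ext h)
  have hzz : z * z = 1 := by
    rcases hmem' (z' * z') with h | h
    · rw [hzdef]; exact_mod_cast h
    · exact absurd (mul_eq_right.mp h) hz'1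
  have hmem : ∀ a ∈ A, a = 1 ∨ a = z := fun a ha =>
    (hmem' ⟨a, ha⟩).imp (fun h => congrArg Subtype.val h) (fun h => congrArg Subtype.val h)
  have hsymc : ∀ η' : G → G → ℂˣ, IsCocycle η' → ∀ g, η' g z = η' z g :=
    fun η' hη' g => hcon η' hη' g z hzA
  have hκcoc : IsCocycle (kappa A) := kappa_cocycle A hA1 hz1 hzz hmem
  -- surjectivity of inflation
  have hsurj : Function.Surjective (InflQ A) := by
    intro q
    induction q using Quot.ind with
    | _ η =>
      obtain ⟨η, hη⟩ := η
      obtain ⟨η', hη', hrel, h1y, _h1x, hzz'⟩ := normalize hz1 hzz hη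
      obtain ⟨μ, hμ, hrel2⟩ :=
        descent A hA1 hzA hz1 hzz hmem hη' h1y hzz' (fun g => hsymc η' hη' g)
      refine ⟨Quot.mk _ ⟨μ, hμ⟩, ?_⟩
      show Quot.mk _ (⟨infl A μ, infl_cocycle hμ⟩ : {f : G → G → ℂˣ // IsCocycle f})
        = Quot.mk _ ⟨η, hη⟩
      exact quot_eq_iff.2 (cohRel_symm (cohRel_trans hrel hrel2))
  -- multiplication by κ preserves fibers of inflation
  have hIK : ∀ d, InflQ A (KMul A hκcoc d) = InflQ A d := by
    intro d
    induction d using Quot.ind with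
    | _ μ =>
      apply (quot_eq_iff (G := G)).2
      apply cohRel_symm
      obtain ⟨τ, hτ⟩ := infl_kappa_coboundary A hA1 hz1 hzz hmem
      refine ⟨τ, fun g h => ?_⟩
      show μ.1 (↑g) (↑h) * kappa A (↑g) (↑h)
        = μ.1 (↑g) (↑h) * τ g * τ h * (τ (g*h))⁻¹
      have h2 := hτ g h
      rw [show kappa A ((g : G ⧸ A)) ((h : G ⧸ A)) = infl A (kappa A) g h from rfl, h2,
        Units.ext_iff]
      push_cast
      ring
  -- and moves every class
  have hKne : ∀ d, KMul A hκcoc d ≠ d := by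
    intro d
    induction d using Quot.ind with
    | _ μ =>
      intro hEq
      obtain ⟨τ, hτ⟩ := (quot_eq_iff (G := G ⧸ A)).1 hEq
      apply kappa_nontrivial A hA1 hA2 hzA hz1 hzz hmem
      refine ⟨fun x => (τ x)⁻¹, fun x y => ?_⟩
      have h2 := hτ x y
      rw [Units.ext_iff] at h2 ⊢
      push_cast at h2 ⊢
      field_simp at h2 ⊢
      have hM : ((μ.1 x y : ℂˣ) : ℂ) ≠ 0 := Units.ne_zero _
      have h3 : ((τ (x*y) : ℂˣ) : ℂ) = (kappa A x y : ℂ) * τ x * τ y := by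
        apply mul_left_cancel₀ hM
        linear_combination ((μ.1 x y : ℂˣ) : ℂ) * h2
      linear_combination -h3
  -- counting
  haveI : Finite (G ⧸ A) := Quotient.finite _
  haveI hfq : Finite (Quot (CohRel (G ⧸ A))) := finite_quot
  set sec : Quot (CohRel G) → Quot (CohRel (G ⧸ A)) := Function.surjInv hsurj with hsec
  have hkey : ∀ p : Quot (CohRel G) × Bool,
      InflQ A (if p.2 then KMul A hκcoc (sec p.1) else sec p.1) = p.1 := by
    rintro ⟨c, b⟩
    cases b
    · exact Function.surjInv_eq hsurj c
    · show InflQ A (KMul A hκcoc (sec c)) = c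
      rw [hIK]
      exact Function.surjInv_eq hsurj c
  have hinj : Function.Injective (fun p : Quot (CohRel G) × Bool =>
      if p.2 then KMul A hκcoc (sec p.1) else sec p.1) := by
    rintro ⟨c, b⟩ ⟨c', b'⟩ hEq
    have hc : c = c' := by
      have h1 := congrArg (InflQ A) hEq
      rw [hkey ⟨c, b⟩, hkey ⟨c', b'⟩] at h1
      exact h1
    subst hc
    simp only at hEq
    cases b <;> cases b'
    · rfl
    · exact absurd hEq.symm (hKne (sec c))
    · exact absurd hEq (hKne (sec c))
    · rfl
  have hle := Nat.card_le_card_of_injective _ hinj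
  rw [Nat.card_prod] at hle
  have hbool : Nat.card Bool = 2 := by simp [Nat.card_eq_fintype_card]
  rw [hbool] at hle
  unfold H2card at hH
  omega
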